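/- arXiv:0803.2004 — 2 statements merged into one kernel-verified Lean document; each statement's English description precedes it below -/
import Mathlib

section
/- If Λ is an A_φ-interpolating sequence in the unit disk, then Λ is weakly separated in the pseudo-hyperbolic sense: there exist C>0 and ε>0 such that the pseudo-hyperbolic disks D_H(λ, ε e^{−Cφ(λ)}) = {z ∈ 𝔻 : ρ(z,λ) < ε e^{−Cφ(λ)}}, λ ∈ Λ, are pairwise disjoint; consequently ∑_{λ∈Λ} (1−|λ|)² e^{−2Cφ(λ)} < ∞, and using (wd1), ∑_{λ∈Λ} e^{−C'φ(λ)} < ∞ for some C'>0. -/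
open Complex Metric Set

noncomputable def divDiff : (k : ℕ) → (ℂ → ℂ) → (Fin (k+1) → ℂ) → ℂ
  | 0, ω, z => ω (z 0)
  | k+1, ω, z =>
      (divDiff k ω (fun i => z i.succ) - divDiff k ω (fun i => z i.castSucc)) /
        (z (Fin.last (k+1)) - z 0)

/-- `p` is a weight on `ℂ`: nonnegative, `p(z) ≥ K log(1+|z|²)` for some `K > 0`,
and `p(z) ≤ D₀ p(w) + E₀` whenever `|z-w| ≤ 1`. -/
def IsWeight (p : ℂ → ℝ) : Prop :=
  (∀ z, 0 ≤ p z) ∧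
  (∃ K > 0, ∀ z : ℂ, K * Real.log (1 + ‖z‖ ^ 2) ≤ p z) ∧
  (∃ D > 0, ∃ E > 0, ∀ z w : ℂ, ‖z - w‖ ≤ 1 → p z ≤ D * p w + E)

/-- `ω ∈ X^k_p(Λ)`: the divided differences of order `k` (on `k+1` distinct points of `Λ`)
are uniformly bounded with respect to the weight `p`. -/
def MemX (p : ℂ → ℝ) (Λ : Set ℂ) (k : ℕ) (ω : ℂ → ℂ) : Prop :=
  ∃ A > 0, ∃ B > 0, ∀ z : Fin (k+1) → ℂ, (∀ i, z i ∈ Λ) → Function.Injective z →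
    ‖divDiff k ω z‖ ≤ A * Real.exp (B * ∑ i, p (z i))

/-- `f ∈ A_p`: `f` is entire with `|f(z)| ≤ A e^{B p(z)}` for some `A, B > 0`. -/
def MemAp (p : ℂ → ℝ) (f : ℂ → ℂ) : Prop :=
  Differentiable ℂ f ∧ ∃ A > 0, ∃ B > 0, ∀ z, ‖f z‖ ≤ A * Real.exp (B * p z)

/-- `Λ` is interpolating for `A_p`. -/
def Interpolating (p : ℂ → ℝ) (Λ : Set ℂ) : Prop :=
  ∀ ω : ℂ → ℂ, (∃ A > 0, ∃ B > 0, ∀ l ∈ Λ, ‖ω l‖ ≤ A * Real.exp (B * p l)) →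
    ∃ f, MemAp p f ∧ ∀ l ∈ Λ, f l = ω l

/-- Uniform interpolation bounds (Lemma 2.2.6 of Berenstein–Gay). -/
def UnifInterp (p : ℂ → ℝ) (Λ : Set ℂ) : Prop :=
  ∀ A > 0, ∀ B > 0, ∃ A' > 0, ∃ B' > 0, ∀ ω : ℂ → ℂ,
    (∀ l ∈ Λ, ‖ω l‖ ≤ A * Real.exp (B * p l)) →
    ∃ f, Differentiable ℂ f ∧ (∀ z, ‖f z‖ ≤ A' * Real.exp (B' * p z)) ∧
      ∀ l ∈ Λ, f l = ω l

/-- `Λ` is weakly separated: the disks `D(l, ε e^{-C p l})` are pairwise disjoint. -/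
def WeaklySeparated (p : ℂ → ℝ) (Λ : Set ℂ) : Prop :=
  ∃ ε > 0, ∃ C > 0, ∀ l ∈ Λ, ∀ m ∈ Λ, l ≠ m →
    Disjoint (ball l (ε * Real.exp (-C * p l))) (ball m (ε * Real.exp (-C * p m)))

/-- `Λ` has no accumulation points in `ℂ`. -/
def DiscreteSet (Λ : Set ℂ) : Prop := ∀ z : ℂ, ¬ AccPt z (Filter.principal Λ)

/-- Pseudo-hyperbolic distance on the unit disk. -/
noncomputable def rho (z w : ℂ) : ℝ := ‖(z - w) / (1 - (starRingEnd ℂ) w * z)‖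

/-- A weight on the unit disk. -/
def IsWeightD (φ : ℂ → ℝ) : Prop :=
  (∀ z ∈ ball (0:ℂ) 1, 0 ≤ φ z) ∧
  (∃ K > 0, ∀ z ∈ ball (0:ℂ) 1, K * Real.log (1 / (1 - ‖z‖)) ≤ φ z) ∧
  (∃ D > 0, ∃ E > 0, ∀ z ∈ ball (0:ℂ) 1, ∀ w ∈ ball (0:ℂ) 1,
    rho z w ≤ 1/2 → φ z ≤ D * φ w + E)

/-- `Λ` is interpolating for `A_φ` with uniform bounds. -/
def UnifInterpD (φ : ℂ → ℝ) (Λ : Set ℂ) : Prop :=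
  ∀ A > 0, ∀ B > 0, ∃ A' > 0, ∃ B' > 0, ∀ ω : ℂ → ℂ,
    (∀ l ∈ Λ, ‖ω l‖ ≤ A * Real.exp (B * φ l)) →
    ∃ f : ℂ → ℂ, DifferentiableOn ℂ f (ball 0 1) ∧
      (∀ z ∈ ball (0:ℂ) 1, ‖f z‖ ≤ A' * Real.exp (B' * φ z)) ∧
      ∀ l ∈ Λ, f l = ω l

/-! Interpolating the data that is `1` at `l` and `0` on the rest of `Λ` gives, by the uniform
bounds, holomorphic peak functions `f` with `|f| ≤ A e^{Bφ}`. By (wd2) such an `f` is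
`≲ e^{Cφ(l)}` on the Euclidean disk of radius `(1 - |l|)/2` about `l`, so Schwarz's lemma forces
`1 - |l| ≲ e^{Cφ(l)} |l - m|` for every other `m ∈ Λ`; pseudo-hyperbolic disks of radius
`ε e^{-Cφ(l)}` are then disjoint. They contain disjoint Euclidean disks of radius
`ε e^{-Cφ(l)} (1 - |l|)` inside `𝔻`, whose areas sum to at most `π`, and (wd1) gives
`e^{-2φ/K} ≤ (1 - |l|)²`. -/

/-- The pseudo-hyperbolic disk `D_H(c, r)`. -/
def phDisk (c : ℂ) (r : ℝ) : Set ℂ := {z ∈ ball (0:ℂ) 1 | rho z c < r}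

section PseudoHyperbolic

variable {z w : ℂ}

lemma one_sub_norm_le_norm_one_sub_conj_mul (hz : ‖z‖ ≤ 1) :
    1 - ‖w‖ ≤ ‖1 - starRingEnd ℂ w * z‖ := by
  have h := norm_sub_norm_le (1 : ℂ) (starRingEnd ℂ w * z)
  rw [norm_one, norm_mul, Complex.norm_conj] at h
  nlinarith [norm_nonneg w]

lemma norm_one_sub_conj_mul_le (hw : ‖w‖ ≤ 1) :
    ‖1 - starRingEnd ℂ w * z‖ ≤ 2 * (1 - ‖w‖) + ‖z - w‖ := by
  have hid : 1 - starRingEnd ℂ w * z = ((1 - ‖w‖ ^ 2 : ℝ) : ℂ) + starRingEnd ℂ w * (w - z) := by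
    rw [Complex.ofReal_sub, Complex.ofReal_one, Complex.ofReal_pow, ← Complex.conj_mul']
    ring
  have h1 : ‖((1 - ‖w‖ ^ 2 : ℝ) : ℂ)‖ ≤ 2 * (1 - ‖w‖) := by
    rw [Complex.norm_real, Real.norm_of_nonneg (by nlinarith [norm_nonneg w])]
    nlinarith [norm_nonneg w]
  have h2 : ‖starRingEnd ℂ w * (w - z)‖ ≤ ‖z - w‖ := by
    rw [norm_mul, Complex.norm_conj, norm_sub_rev]
    exact mul_le_of_le_one_left (norm_nonneg _) hw
  rw [hid]
  exact (norm_add_le _ _).trans (add_le_add h1 h2)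

lemma rho_le_norm_sub_div (hw : ‖w‖ < 1) (hz : ‖z‖ ≤ 1) :
    rho z w ≤ ‖z - w‖ / (1 - ‖w‖) := by
  rw [rho, norm_div]
  exact div_le_div_of_nonneg_left (norm_nonneg _) (by linarith)
    (one_sub_norm_le_norm_one_sub_conj_mul hz)

lemma norm_sub_le_four_mul_rho (hw : ‖w‖ < 1) (hz : ‖z‖ ≤ 1) (hρ : rho z w ≤ 1 / 2) :
    ‖z - w‖ ≤ 4 * rho z w * (1 - ‖w‖) := by
  have hden : 0 < ‖1 - starRingEnd ℂ w * z‖ :=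
    (sub_pos.mpr hw).trans_le (one_sub_norm_le_norm_one_sub_conj_mul hz)
  have heq : ‖z - w‖ = rho z w * ‖1 - starRingEnd ℂ w * z‖ := by
    rw [rho, norm_div, div_mul_cancel₀ _ hden.ne']
  have hρ0 : 0 ≤ rho z w := norm_nonneg _
  -- `|z - w| = ρ |1 - w̄z| ≤ ρ (2(1 - |w|) + |z - w|)`, and `ρ ≤ 1/2` absorbs the last term
  have := mul_le_mul_of_nonneg_left (norm_one_sub_conj_mul_le (z := z) hw.le) hρ0
  nlinarith [mul_le_mul_of_nonneg_right hρ (norm_nonneg (z - w))]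

lemma ball_subset_phDisk (hw : ‖w‖ < 1) {r : ℝ} (hr : r ≤ 1) :
    ball w (r * (1 - ‖w‖)) ⊆ phDisk w r := by
  intro z hz
  rw [mem_ball, dist_eq_norm] at hz
  have hz1 : ‖z‖ < 1 := by
    have := norm_le_norm_sub_add z w
    nlinarith
  refine ⟨mem_ball_zero_iff.mpr hz1, (rho_le_norm_sub_div hw hz1.le).trans_lt ?_⟩
  rwa [div_lt_iff₀ (by linarith)]

lemma norm_sub_lt_of_mem_phDisk (hw : ‖w‖ < 1) {r : ℝ} (hr : r ≤ 1 / 2) (hz : z ∈ phDisk w r) :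
    ‖z - w‖ < 4 * r * (1 - ‖w‖) := by
  have hz1 : ‖z‖ ≤ 1 := (mem_ball_zero_iff.mp hz.1).le
  calc ‖z - w‖ ≤ 4 * rho z w * (1 - ‖w‖) :=
        norm_sub_le_four_mul_rho hw hz1 (hz.2.le.trans hr)
    _ < 4 * r * (1 - ‖w‖) := by
        have : rho z w < r := hz.2
        gcongr

lemma disjoint_phDisk {l m : ℂ} (hl : ‖l‖ < 1) (hm : ‖m‖ < 1) {r s : ℝ} (hr : r ≤ 1 / 2)
    (hs : s ≤ 1 / 2) (h : 4 * r * (1 - ‖l‖) + 4 * s * (1 - ‖m‖) ≤ ‖l - m‖) :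
    Disjoint (phDisk l r) (phDisk m s) := by
  refine Set.disjoint_left.mpr fun z hzl hzm => ?_
  have := norm_sub_le_norm_sub_add_norm_sub l z m
  rw [norm_sub_rev l z] at this
  linarith [norm_sub_lt_of_mem_phDisk hl hr hzl, norm_sub_lt_of_mem_phDisk hm hs hzm]

end PseudoHyperbolic

open MeasureTheory in
lemma summable_sq_radius_of_pairwise_disjoint_ball {ι : Type*} (c : ι → ℂ) (s : ι → ℝ)
    (hs : ∀ i, 0 ≤ s i) (hdisj : Pairwise fun i j => Disjoint (ball (c i) (s i)) (ball (c j) (s j)))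
    {S : Set ℂ} (hS : volume S ≠ ⊤) (hsub : ∀ i, ball (c i) (s i) ⊆ S) :
    Summable fun i => s i ^ 2 := by
  have hπ : (NNReal.pi : ENNReal) ≠ 0 := by simp [NNReal.pi_ne_zero]
  refine summable_of_sum_le (c := (volume S / NNReal.pi).toReal) (fun i => sq_nonneg (s i))
    fun F => ?_
  have harea : ∑ i ∈ F, volume (ball (c i) (s i)) ≤ volume S := by
    rw [← measure_biUnion_finset (fun i _ j _ hij => hdisj hij) fun i _ => measurableSet_ball]
    exact measure_mono (Set.iUnion₂_subset fun i _ => hsub i)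
  simp only [Complex.volume_ball, ← Finset.sum_mul, ← ENNReal.ofReal_pow (hs _)] at harea
  rw [← ENNReal.ofReal_sum_of_nonneg fun i _ => sq_nonneg (s i),
    ← ENNReal.le_div_iff_mul_le (Or.inl hπ) (Or.inl ENNReal.coe_ne_top)] at harea
  exact (ENNReal.ofReal_le_iff_le_toReal (ENNReal.div_ne_top hS hπ)).mp harea

lemma le_two_mul_dist_of_eq_one_of_eq_zero {f : ℂ → ℂ} {c m : ℂ} {d M : ℝ} (hd : 0 < d)
    (hf : DifferentiableOn ℂ f (ball c d)) (hM : ∀ z ∈ ball c d, ‖f z‖ ≤ M) (hc : f c = 1)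
    (hm : f m = 0) : d ≤ 2 * M * dist m c := by
  have hM1 : 1 ≤ M := by simpa [hc] using hM c (mem_ball_self hd)
  by_cases hmc : m ∈ ball c d
  · have hmaps : MapsTo f (ball c d) (closedBall (f c) (2 * M)) := fun z hz => by
      rw [mem_closedBall, dist_eq_norm, hc]
      linarith [norm_sub_le (f z) 1, norm_one (α := ℂ), hM z hz]
    have := Complex.dist_le_div_mul_dist_of_mapsTo_ball hf hmaps hmc
    rw [hm, hc, dist_zero_left, norm_one, div_mul_eq_mul_div, le_div_iff₀ hd] at this
    linarith
  · have : d ≤ dist m c := not_lt.mp hmc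
    nlinarith [dist_nonneg (x := m) (y := c)]

lemma exp_neg_two_div_mul_le_sq {K t p : ℝ} (hK : 0 < K) (ht : 0 < t)
    (h : K * Real.log (1 / t) ≤ p) : Real.exp (-(2 / K) * p) ≤ t ^ 2 := by
  have hlog : -Real.log t ≤ p / K := by
    rw [le_div_iff₀ hK, ← Real.log_inv, ← one_div]
    linarith
  calc Real.exp (-(2 / K) * p) ≤ Real.exp (Real.log (t ^ 2)) := by
        rw [Real.exp_le_exp, Real.log_pow]
        have : -(2 / K) * p = -2 * (p / K) := by ring
        push_cast
        linarith
    _ = t ^ 2 := Real.exp_log (by positivity)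

section Interpolation

variable {φ : ℂ → ℝ} {Λ : Set ℂ}

lemma UnifInterpD.exists_peak (hI : UnifInterpD φ Λ) (hφ : ∀ l ∈ Λ, 0 ≤ φ l) :
    ∃ A > 0, ∃ B > 0, ∀ l ∈ Λ, ∃ f : ℂ → ℂ, DifferentiableOn ℂ f (ball 0 1) ∧
      (∀ z ∈ ball (0:ℂ) 1, ‖f z‖ ≤ A * Real.exp (B * φ z)) ∧ f l = 1 ∧
      ∀ m ∈ Λ, m ≠ l → f m = 0 := by
  obtain ⟨A, hA, B, hB, hinterp⟩ := hI 1 one_pos 1 one_pos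
  refine ⟨A, hA, B, hB, fun l hl => ?_⟩
  have hδ : ∀ m ∈ Λ, ‖(if m = l then 1 else 0 : ℂ)‖ ≤ 1 * Real.exp (1 * φ m) := by
    intro m hm
    split_ifs with hml
    · simpa [hml] using hφ l hl
    · simp only [norm_zero]
      positivity
  obtain ⟨f, hfd, hfb, hfΛ⟩ := hinterp _ hδ
  exact ⟨f, hfd, hfb, by simpa using hfΛ l hl, fun m hm hml => by simpa [hml] using hfΛ m hm⟩

lemma IsWeightD.exists_one_sub_norm_le_mul_norm_sub (hφ : IsWeightD φ) (hΛ : Λ ⊆ ball (0:ℂ) 1)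
    (hI : UnifInterpD φ Λ) :
    ∃ A > 0, ∃ C > 0, ∀ l ∈ Λ, ∀ m ∈ Λ, m ≠ l →
      1 - ‖l‖ ≤ A * Real.exp (C * φ l) * ‖l - m‖ := by
  obtain ⟨hφ0, -, D, hD, E, hE, hDE⟩ := hφ
  obtain ⟨A, hA, B, hB, hpeak⟩ := hI.exists_peak fun l hl => hφ0 l (hΛ hl)
  refine ⟨4 * A * Real.exp (B * E), by positivity, B * D, by positivity,
    fun l hl m hm hml => ?_⟩
  obtain ⟨f, hfd, hfb, hfl, hfm⟩ := hpeak l hl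
  have hl1 : ‖l‖ < 1 := mem_ball_zero_iff.mp (hΛ hl)
  have hsub : ball l (1 / 2 * (1 - ‖l‖)) ⊆ phDisk l (1 / 2) :=
    ball_subset_phDisk hl1 (by norm_num)
  have hbound : ∀ z ∈ ball l (1 / 2 * (1 - ‖l‖)),
      ‖f z‖ ≤ A * Real.exp (B * E) * Real.exp (B * D * φ l) := by
    intro z hz
    obtain ⟨hz1, hρ⟩ := hsub hz
    calc ‖f z‖ ≤ A * Real.exp (B * φ z) := hfb z hz1
      _ ≤ A * Real.exp (B * (D * φ l + E)) := by
          gcongr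
          exact hDE z hz1 l (hΛ hl) hρ.le
      _ = A * Real.exp (B * E) * Real.exp (B * D * φ l) := by
          rw [mul_assoc, ← Real.exp_add]
          ring_nf
  have := le_two_mul_dist_of_eq_one_of_eq_zero (by linarith)
    (hfd.mono (hsub.trans fun z hz => hz.1)) hbound hfl (hfm m hm hml)
  rw [dist_comm, dist_eq_norm] at this
  linarith

lemma exists_pairwise_disjoint_phDisk (hΛ : Λ ⊆ ball (0:ℂ) 1) (hφ : ∀ l ∈ Λ, 0 ≤ φ l)
    {A C : ℝ} (hA : 0 < A) (hC : 0 ≤ C)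
    (hsep : ∀ l ∈ Λ, ∀ m ∈ Λ, m ≠ l → 1 - ‖l‖ ≤ A * Real.exp (C * φ l) * ‖l - m‖) :
    ∃ ε > 0, ε ≤ 1 / 2 ∧ ∀ l ∈ Λ, ∀ m ∈ Λ, l ≠ m →
      Disjoint (phDisk l (ε * Real.exp (-C * φ l))) (phDisk m (ε * Real.exp (-C * φ m))) := by
  set ε := min (1 / 2) (1 / (8 * A))
  have hε : 0 < ε := lt_min (by norm_num) (by positivity)
  have hr : ∀ l ∈ Λ, ε * Real.exp (-C * φ l) ≤ 1 / 2 := fun l hl =>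
    calc ε * Real.exp (-C * φ l) ≤ ε * 1 := by
          gcongr
          exact Real.exp_le_one_iff.mpr (by nlinarith [hφ l hl])
      _ ≤ 1 / 2 := by simpa only [mul_one] using min_le_left (1 / 2 : ℝ) (1 / (8 * A))
  have hquarter : ∀ l ∈ Λ, ∀ m ∈ Λ, m ≠ l →
      4 * (ε * Real.exp (-C * φ l)) * (1 - ‖l‖) ≤ ‖l - m‖ / 2 := by
    intro l hl m hm hml
    have h8 : ε * (8 * A) ≤ 1 := (le_div_iff₀ (by positivity)).mp (min_le_right _ _)
    calc 4 * (ε * Real.exp (-C * φ l)) * (1 - ‖l‖)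
        ≤ 4 * (ε * Real.exp (-C * φ l)) * (A * Real.exp (C * φ l) * ‖l - m‖) := by
          gcongr
          exact hsep l hl m hm hml
      _ = 4 * ε * A * ‖l - m‖ * (Real.exp (-C * φ l) * Real.exp (C * φ l)) := by ring
      _ ≤ ‖l - m‖ / 2 := by
          rw [← Real.exp_add, neg_mul, neg_add_cancel, Real.exp_zero]
          nlinarith [norm_nonneg (l - m)]
  refine ⟨ε, hε, min_le_left _ _, fun l hl m hm hlm => disjoint_phDisk
    (mem_ball_zero_iff.mp (hΛ hl)) (mem_ball_zero_iff.mp (hΛ hm)) (hr l hl) (hr m hm) ?_⟩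
  have := hquarter m hm l hl hlm
  rw [norm_sub_rev] at this
  linarith [hquarter l hl m hm hlm.symm]

lemma summable_sq_of_pairwise_disjoint_phDisk (hΛ : Λ ⊆ ball (0:ℂ) 1) (r : ℂ → ℝ)
    (hr0 : ∀ l ∈ Λ, 0 ≤ r l) (hr1 : ∀ l ∈ Λ, r l ≤ 1)
    (hdisj : ∀ l ∈ Λ, ∀ m ∈ Λ, l ≠ m → Disjoint (phDisk l (r l)) (phDisk m (r m))) :
    Summable fun l : Λ => (r l * (1 - ‖(l : ℂ)‖)) ^ 2 := by
  have hl1 : ∀ l : Λ, ‖(l : ℂ)‖ < 1 := fun l => mem_ball_zero_iff.mp (hΛ l.2)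
  have hsub : ∀ l : Λ, ball (l : ℂ) (r l * (1 - ‖(l : ℂ)‖)) ⊆ phDisk l (r l) := fun l =>
    ball_subset_phDisk (hl1 l) (hr1 l l.2)
  refine summable_sq_radius_of_pairwise_disjoint_ball (fun l : Λ => (l : ℂ)) _
    (fun l => mul_nonneg (hr0 l l.2) (sub_pos.mpr (hl1 l)).le)
    (fun l m hlm => (hdisj l l.2 m m.2 (Subtype.coe_injective.ne hlm)).mono (hsub l) (hsub m))
    MeasureTheory.measure_ball_lt_top.ne fun l => (hsub l).trans fun z hz => hz.1

end Interpolation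

theorem stmt17 (φ : ℂ → ℝ) (hφ : IsWeightD φ) (Λ : Set ℂ) (hΛ : Λ ⊆ ball (0:ℂ) 1)
    (hI : UnifInterpD φ Λ) :
    ∃ C > (0:ℝ), ∃ ε > (0:ℝ),
      (∀ l ∈ Λ, ∀ m ∈ Λ, l ≠ m →
        Disjoint {z ∈ ball (0:ℂ) 1 | rho z l < ε * Real.exp (-C * φ l)}
          {z ∈ ball (0:ℂ) 1 | rho z m < ε * Real.exp (-C * φ m)}) ∧
      Summable (fun l : Λ => (1 - ‖(l : ℂ)‖)^2 * Real.exp (-2 * C * φ l)) ∧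
      ∃ C' > (0:ℝ), Summable (fun l : Λ => Real.exp (-C' * φ l)) := by
  obtain ⟨A, hA, C, hC, hsep⟩ := hφ.exists_one_sub_norm_le_mul_norm_sub hΛ hI
  obtain ⟨hφ0, ⟨K, hK, hKlog⟩, -⟩ := hφ
  obtain ⟨ε, hε, hε2, hdisj⟩ :=
    exists_pairwise_disjoint_phDisk hΛ (fun l hl => hφ0 l (hΛ hl)) hA hC.le hsep
  have hr1 : ∀ l ∈ Λ, ε * Real.exp (-C * φ l) ≤ 1 := fun l hl => by
    have : Real.exp (-C * φ l) ≤ 1 := Real.exp_le_one_iff.mpr (by nlinarith [hφ0 l (hΛ hl)])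
    nlinarith
  have hsum : Summable fun l : Λ => (1 - ‖(l : ℂ)‖) ^ 2 * Real.exp (-2 * C * φ l) := by
    refine (summable_mul_left_iff (pow_ne_zero 2 hε.ne')).mp
      ((summable_sq_of_pairwise_disjoint_phDisk hΛ _ (fun l _ => by positivity) hr1
        hdisj).congr fun l => ?_)
    rw [mul_pow, mul_pow, ← Real.exp_nat_mul]
    ring_nf
  refine ⟨C, hC, ε, hε, hdisj, hsum, 2 * C + 2 / K, by positivity,
    hsum.of_nonneg_of_le (fun _ => (Real.exp_pos _).le) fun l => ?_⟩
  have hl1 : 0 < 1 - ‖(l : ℂ)‖ := sub_pos.mpr (mem_ball_zero_iff.mp (hΛ l.2))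
  calc Real.exp (-(2 * C + 2 / K) * φ l) = Real.exp (-(2 / K) * φ l) * Real.exp (-2 * C * φ l) := by
        rw [← Real.exp_add]
        ring_nf
    _ ≤ (1 - ‖(l : ℂ)‖) ^ 2 * Real.exp (-2 * C * φ l) := by
        gcongr
        exact exp_neg_two_div_mul_le_sq hK hl1 (hKlog l (hΛ l.2))
end

section
/- For a discrete sequence Λ ⊂ ℂ, if X⁰_p(Λ) = X¹_p(Λ) then there exist ε>0 and C>0 such that each disk D(λ, ε e^{−Cp(λ)}), λ ∈ Λ, contains at most one point of Λ, i.e., Λ is weakly separated. -/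
open Complex Metric Set

open Filter Topology

/-!
If `Λ` is not weakly separated, it contains pairs `x ≠ y` with
`|x - y| < e^{-m(1 + p x)}` for every `m`. As the distances tend to `0` and `Λ` is discrete, each
point of `Λ` lies in only finitely many of these pairs, so a subsequence can be chosen in which no
first point of one pair is the second point of another. The indicator function of the first points is bounded, hence lies in `X⁰_p(Λ)`, but its
difference quotients on the pairs grow faster than any `A e^{B(p x + p y)}`, so it is not in
`X¹_p(Λ)`.
-/

section Weight

variable {p : ℂ → ℝ} {Λ : Set ℂ}

lemma exists_close_pair_of_not_separated (hp0 : ∀ z, 0 ≤ p z) {D E : ℝ} (hD : 0 < D)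
    (hE : 0 ≤ E) (hDE : ∀ z w : ℂ, ‖z - w‖ ≤ 1 → p z ≤ D * p w + E)
    (hsep : ∀ ε > 0, ∀ C > 0, ∃ l ∈ Λ, 1 < (Λ ∩ ball l (ε * Real.exp (-C * p l))).encard)
    {m : ℝ} (hm : 0 < m) :
    ∃ x ∈ Λ, ∃ y ∈ Λ, x ≠ y ∧ dist x y < Real.exp (-m * (1 + p x)) := by
  obtain ⟨l, -, hcard⟩ := hsep (Real.exp (-m * (1 + E)) / 2) (by positivity) (m * D) (by positivity)
  obtain ⟨x, y, ⟨hxΛ, hxl⟩, ⟨hyΛ, hyl⟩, hxy⟩ := Set.one_lt_encard_iff.1 hcard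
  refine ⟨x, hxΛ, y, hyΛ, hxy, ?_⟩
  set r := Real.exp (-m * (1 + E)) / 2 * Real.exp (-(m * D) * p l)
  rw [mem_ball] at hxl hyl
  have hr : r ≤ 1 / 2 := by
    have h1 : Real.exp (-m * (1 + E)) ≤ 1 := Real.exp_le_one_iff.2 (by nlinarith)
    have h2 : Real.exp (-(m * D) * p l) ≤ 1 :=
      Real.exp_le_one_iff.2 (by nlinarith [hp0 l, mul_pos hm hD])
    have := mul_le_mul h1 h2 (Real.exp_pos _).le zero_le_one
    simp only [r]
    linarith
  have hpx : p x ≤ D * p l + E := hDE x l (by rw [← dist_eq]; linarith)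
  calc dist x y ≤ dist x l + dist y l := dist_triangle_right x y l
    _ < 2 * r := by linarith
    _ = Real.exp (-m * (1 + E)) * Real.exp (-(m * D) * p l) := by simp only [r]; ring
    _ = Real.exp (-m * (1 + E) + -(m * D) * p l) := (Real.exp_add _ _).symm
    _ ≤ Real.exp (-m * (1 + p x)) := Real.exp_le_exp.2 (by nlinarith)

lemma memX_zero_of_norm_le_one (hp0 : ∀ z, 0 ≤ p z) {ω : ℂ → ℂ} (hω : ∀ z, ‖ω z‖ ≤ 1) :
    MemX p Λ 0 ω := by
  refine ⟨1, one_pos, 1, one_pos, fun z _ _ => (hω (z 0)).trans ?_⟩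
  rw [one_mul, one_mul]
  exact Real.one_le_exp (Finset.sum_nonneg fun i _ => hp0 (z i))

lemma MemX.exists_norm_slope_le {ω : ℂ → ℂ} (h : MemX p Λ 1 ω) :
    ∃ A > 0, ∃ B > 0, ∀ x ∈ Λ, ∀ y ∈ Λ, x ≠ y →
      ‖(ω x - ω y) / (x - y)‖ ≤ A * Real.exp (B * (p x + p y)) := by
  obtain ⟨A, hA, B, hB, hbd⟩ := h
  refine ⟨A, hA, B, hB, fun x hx y hy hxy => ?_⟩
  have hinj : Function.Injective ![y, x] := by
    intro i j
    fin_cases i <;> fin_cases j <;> simp [hxy, hxy.symm]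
  have := hbd ![y, x] (fun i => by fin_cases i <;> assumption) hinj
  rwa [Fin.sum_univ_two, add_comm] at this

lemma not_memX_one_of_exists_close_jump (hp0 : ∀ z, 0 ≤ p z) {D E : ℝ} (hD : 0 < D)
    (hDE : ∀ z w : ℂ, ‖z - w‖ ≤ 1 → p z ≤ D * p w + E) {ω : ℂ → ℂ}
    (hjump : ∀ m : ℝ, ∃ x ∈ Λ, ∃ y ∈ Λ, 1 ≤ ‖ω x - ω y‖ ∧
      dist x y < Real.exp (-m * (1 + p x))) :
    ¬ MemX p Λ 1 ω := by
  intro hω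
  obtain ⟨A, hA, B, hB, hbd⟩ := hω.exists_norm_slope_le
  set m := max (B * (1 + D)) (Real.log A + B * E)
  have hm : 0 < m := lt_max_of_lt_left (by positivity)
  obtain ⟨x, hx, y, hy, hjump, hxy⟩ := hjump m
  have hpos : 0 < dist x y := dist_pos.2 fun h => by norm_num [h] at hjump
  have hpy : p y ≤ D * p x + E := by
    refine hDE y x ?_
    rw [← dist_eq, dist_comm]
    exact hxy.le.trans (Real.exp_le_one_iff.2 (by nlinarith [hp0 x]))
  have hlower : Real.exp (m * (1 + p x)) < ‖(ω x - ω y) / (x - y)‖ := by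
    rw [norm_div, ← dist_eq x y, lt_div_iff₀ hpos]
    calc Real.exp (m * (1 + p x)) * dist x y
        < Real.exp (m * (1 + p x)) * Real.exp (-m * (1 + p x)) := by gcongr
      _ = 1 := by rw [← Real.exp_add]; ring_nf; exact Real.exp_zero
      _ ≤ ‖ω x - ω y‖ := hjump
  have hupper : A * Real.exp (B * (p x + p y)) ≤ Real.exp (m * (1 + p x)) := by
    rw [← Real.exp_log hA, ← Real.exp_add]
    refine Real.exp_le_exp.2 ?_
    nlinarith [le_max_left (B * (1 + D)) (Real.log A + B * E),
      le_max_right (B * (1 + D)) (Real.log A + B * E), hp0 x, hp0 y]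
  exact (hlower.trans_le (hbd x hx y hy (dist_pos.1 hpos))).not_ge hupper

end Weight

lemma DiscreteSet.finite_preimage_singleton {Λ : Set ℂ} (hΛ : DiscreteSet Λ) {a b : ℕ → ℂ}
    (hb : ∀ n, b n ∈ Λ) (hab : ∀ n, a n ≠ b n)
    (hlim : Tendsto (fun n => dist (a n) (b n)) atTop (𝓝 0)) (c : ℂ) :
    (a ⁻¹' {c}).Finite := by
  by_contra hinf
  refine hΛ c (accPt_iff_nhds.2 fun U hU => ?_)
  obtain ⟨δ, hδ, hδU⟩ := Metric.mem_nhds_iff.1 hU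
  obtain ⟨n, hn, hclose⟩ := ((Nat.frequently_atTop_iff_infinite.2 hinf).and_eventually
    (hlim.eventually (gt_mem_nhds hδ))).exists
  rw [mem_singleton_iff] at hn
  subst hn
  exact ⟨b n, ⟨hδU (by rwa [mem_ball, dist_comm]), hb n⟩, (hab n).symm⟩

lemma exists_strictMono_forall_ne {α : Type*} {u v : ℕ → α} (huv : ∀ n, u n ≠ v n)
    (hu : ∀ c, (u ⁻¹' {c}).Finite) (hv : ∀ c, (v ⁻¹' {c}).Finite) :
    ∃ φ : ℕ → ℕ, StrictMono φ ∧ ∀ j k, u (φ j) ≠ v (φ k) := by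
  obtain ⟨φ, -, hφ⟩ := exists_seq_of_forall_finset_exists (fun _ => True)
    (fun i j => i < j ∧ u i ≠ v j ∧ u j ≠ v i) fun s _ => by
      have hfin : (⋃ i ∈ s, Iic i ∪ v ⁻¹' {u i} ∪ u ⁻¹' {v i}).Finite :=
        s.finite_toSet.biUnion fun i _ => ((finite_Iic i).union (hv _)).union (hu _)
      obtain ⟨j, hj⟩ := hfin.exists_notMem
      simp only [mem_iUnion, mem_union, mem_Iic, mem_preimage, mem_singleton_iff, not_exists,
        not_or, not_le] at hj
      exact ⟨j, trivial, fun i hi => ⟨(hj i hi).1.1, Ne.symm (hj i hi).1.2, (hj i hi).2⟩⟩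
  refine ⟨φ, fun j k hjk => (hφ j k hjk).1, fun j k => ?_⟩
  rcases lt_trichotomy j k with hjk | rfl | hkj
  · exact (hφ j k hjk).2.1
  · exact huv _
  · exact (hφ k j hkj).2.2

theorem stmt18 (p : ℂ → ℝ) (hp : IsWeight p) (Λ : Set ℂ) (hΛd : DiscreteSet Λ)
    (h : ∀ ω : ℂ → ℂ, MemX p Λ 0 ω ↔ MemX p Λ 1 ω) :
    ∃ ε > 0, ∃ C > 0, ∀ l ∈ Λ,
      (Λ ∩ ball l (ε * Real.exp (-C * p l))).encard ≤ 1 := by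
  obtain ⟨hp0, -, D, hD, E, hE, hDE⟩ := hp
  by_contra! hsep
  choose a ha b hb hab hclose using fun n : ℕ =>
    exists_close_pair_of_not_separated hp0 hD hE.le hDE hsep (m := n + 1) (by positivity)
  have hlim : Tendsto (fun n => dist (a n) (b n)) atTop (𝓝 0) := by
    refine squeeze_zero (fun _ => dist_nonneg) (fun n => (hclose n).le.trans
      (Real.exp_le_exp.2 (by nlinarith [hp0 (a n)] : -((n : ℝ) + 1) * (1 + p (a n)) ≤ -n))) ?_
    exact Real.tendsto_exp_neg_atTop_nhds_zero.comp tendsto_natCast_atTop_atTop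
  obtain ⟨φ, hφ, hne⟩ := exists_strictMono_forall_ne hab
    (hΛd.finite_preimage_singleton hb hab hlim)
    (hΛd.finite_preimage_singleton ha (fun n => (hab n).symm) (by simpa only [dist_comm] using hlim))
  set ω : ℂ → ℂ := (range (a ∘ φ)).indicator 1
  have hjump : ∀ k, ω (a (φ k)) - ω (b (φ k)) = 1 := fun k => by
    simp [ω, fun j => hne j k]
  refine not_memX_one_of_exists_close_jump hp0 hD hDE (fun m => ?_)
    ((h ω).1 (memX_zero_of_norm_le_one hp0 fun z => ?_))
  · obtain ⟨k, hk⟩ := exists_nat_ge m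
    have hmk : m ≤ φ k + 1 := hk.trans (by exact_mod_cast hφ.le_apply.trans (Nat.le_succ _))
    refine ⟨a (φ k), ha _, b (φ k), hb _, by rw [hjump, norm_one], (hclose _).trans_le ?_⟩
    exact Real.exp_le_exp.2 (by nlinarith [hp0 (a (φ k))])
  · by_cases hz : z ∈ range (a ∘ φ) <;> simp [ω, hz]
end
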